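/- arXiv:2107.00271 — 2 statements merged into one kernel-verified Lean document; each statement's English description precedes it below -/
import Mathlib

section
/- For distinct transactions 1, 2, 3 and distinct variables x, y, the valued history h4 = [wr_1(x,5), wr_2(x,5), wr_1(y,42), wr_2(y,43), cmt_1, rd_3(x,5), cmt_2, rd_3(y,43), cmt_3] is value-opaque, witnessed by the sequential legal history putting transaction 1 before transaction 2 before transaction 3; but h4 is not opaque under the conflict-based definition (i.e., the history obtained from h4 by erasing all values is not opaque), since the conflicts force transaction 2 before transaction 3 (from cmt_2 and the global read rd_3(y)) as well as transaction 3 before transaction 2 (from the global read rd_3(x) and cmt_2). -/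
/-- Statements of the conflict-based setting: reads, writes (without values),
commits and aborts, each tagged with a transaction identifier (a positive natural). -/
inductive Stmt : Type where
  | rd (t : ℕ+) (x : ℕ)
  | wr (t : ℕ+) (x : ℕ)
  | cmt (t : ℕ+)
  | abrt (t : ℕ+)
  deriving DecidableEq

/-- The transaction identifier of a statement. -/
def Stmt.txn : Stmt → ℕ+
  | .rd t _ => t
  | .wr t _ => t
  | .cmt t => t
  | .abrt t => t

/-- The variable mentioned by a statement, if any. -/
def Stmt.var? : Stmt → Option ℕ
  | .rd _ x => some x
  | .wr _ x => some x
  | _ => none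

/-- Projection of a history onto a transaction. -/
def proj (h : List Stmt) (t : ℕ+) : List Stmt :=
  h.filter (fun s => s.txn = t)

/-- Transaction `t` occurs in `h`. -/
def occurs (h : List Stmt) (t : ℕ+) : Prop := proj h t ≠ []

/-- Transaction `t` is committing in `h`. -/
def committing (h : List Stmt) (t : ℕ+) : Prop :=
  (proj h t).getLast? = some (Stmt.cmt t)

/-- Transaction `t` is aborting in `h`. -/
def aborting (h : List Stmt) (t : ℕ+) : Prop :=
  (proj h t).getLast? = some (Stmt.abrt t)

/-- Transaction `t` is finished in `h`. -/
def finished (h : List Stmt) (t : ℕ+) : Prop :=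
  committing h t ∨ aborting h t

/-- Transaction `t` is live in `h`: it occurs but is not finished. -/
def live (h : List Stmt) (t : ℕ+) : Prop := occurs h t ∧ ¬ finished h t

/-- `t1 <_h t2`: both occur and every statement of `t1` occurs strictly before
every statement of `t2` (equivalently, the last statement of `t1` is before the
first statement of `t2`). -/
def precedes (h : List Stmt) (t1 t2 : ℕ+) : Prop :=
  occurs h t1 ∧ occurs h t2 ∧
  ∀ (i j : ℕ) (s1 s2 : Stmt), h[i]? = some s1 → h[j]? = some s2 →
    s1.txn = t1 → s2.txn = t2 → i < j

/-- A history is sequential if any two distinct occurring transactions are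
comparable under `<_h`. -/
def sequential (h : List Stmt) : Prop :=
  ∀ t1 t2, t1 ≠ t2 → occurs h t1 → occurs h t2 →
    precedes h t1 t2 ∨ precedes h t2 t1

/-- Transaction `t` writes to variable `x` in `h`. -/
def writes (h : List Stmt) (t : ℕ+) (x : ℕ) : Prop := Stmt.wr t x ∈ h

/-- The occurrence at position `i` in `h` is a global read `rd_t(x)`:
no `wr_t(x)` occurs before it. -/
def globalRead (h : List Stmt) (i : ℕ) (t : ℕ+) (x : ℕ) : Prop :=
  h[i]? = some (Stmt.rd t x) ∧ ∀ j, j < i → h[j]? ≠ some (Stmt.wr t x)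

/-- The statement occurrences at positions `i` and `j` of `h` (belonging to
distinct transactions) are in conflict. -/
def conflict (h : List Stmt) (i j : ℕ) : Prop :=
  ∃ t1 t2, t1 ≠ t2 ∧
    ((∃ x, globalRead h i t1 x ∧ h[j]? = some (Stmt.cmt t2) ∧ writes h t2 x) ∨
     (∃ x, globalRead h j t1 x ∧ h[i]? = some (Stmt.cmt t2) ∧ writes h t2 x) ∨
     (h[i]? = some (Stmt.cmt t1) ∧ h[j]? = some (Stmt.cmt t2) ∧
      ∃ x, writes h t1 x ∧ writes h t2 x))

/-- Position `i` of `h` and position `i'` of `h'` carry the same statement `s`,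
and it is in both cases the same (`k`-th) occurrence of `s`. -/
def corresponds (h h' : List Stmt) (i i' : ℕ) : Prop :=
  ∃ s, h[i]? = some s ∧ h'[i']? = some s ∧
    (h.take i).count s = (h'.take i').count s

/-- `h'` is strictly equivalent to `h`: it is a rearrangement with the same
per-transaction projections, preserving the real-time order of finished
transactions and the relative order of conflicting statement occurrences. -/
def strictEquiv (h h' : List Stmt) : Prop :=
  h.Perm h' ∧
  (∀ t, proj h t = proj h' t) ∧
  (∀ t1 t2, t1 ≠ t2 → precedes h t1 t2 → finished h t1 → precedes h' t1 t2) ∧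
  (∀ i j i' j', i < j → conflict h i j →
     corresponds h h' i i' → corresponds h h' j j' → i' < j')

/-- A history is opaque if some sequential history is strictly equivalent to it. -/
def IsOpaque (h : List Stmt) : Prop :=
  ∃ h', sequential h' ∧ strictEquiv h h'

/-- Statements of the value-based setting: reads and writes carry a value. -/
inductive VStmt : Type where
  | rd (t : ℕ+) (x : ℕ) (v : ℕ)
  | wr (t : ℕ+) (x : ℕ) (v : ℕ)
  | cmt (t : ℕ+)
  | abrt (t : ℕ+)
  deriving DecidableEq

/-- The transaction identifier of a valued statement. -/
def VStmt.txn : VStmt → ℕ+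
  | .rd t _ _ => t
  | .wr t _ _ => t
  | .cmt t => t
  | .abrt t => t

/-- Erasing the value from a valued statement. -/
def VStmt.erase : VStmt → Stmt
  | .rd t x _ => Stmt.rd t x
  | .wr t x _ => Stmt.wr t x
  | .cmt t => Stmt.cmt t
  | .abrt t => Stmt.abrt t

/-- Erasing all values from a valued history. -/
def eraseH (h : List VStmt) : List Stmt := h.map VStmt.erase

/-- Projection of a valued history onto a transaction. -/
def vProj (h : List VStmt) (t : ℕ+) : List VStmt :=
  h.filter (fun s => s.txn = t)

def vOccurs (h : List VStmt) (t : ℕ+) : Prop := vProj h t ≠ []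

def vCommitting (h : List VStmt) (t : ℕ+) : Prop :=
  (vProj h t).getLast? = some (VStmt.cmt t)

def vAborting (h : List VStmt) (t : ℕ+) : Prop :=
  (vProj h t).getLast? = some (VStmt.abrt t)

def vFinished (h : List VStmt) (t : ℕ+) : Prop :=
  vCommitting h t ∨ vAborting h t

def vPrecedes (h : List VStmt) (t1 t2 : ℕ+) : Prop :=
  vOccurs h t1 ∧ vOccurs h t2 ∧
  ∀ (i j : ℕ) (s1 s2 : VStmt), h[i]? = some s1 → h[j]? = some s2 →
    s1.txn = t1 → s2.txn = t2 → i < j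

def vSequential (h : List VStmt) : Prop :=
  ∀ t1 t2, t1 ≠ t2 → vOccurs h t1 → vOccurs h t2 →
    vPrecedes h t1 t2 ∨ vPrecedes h t2 t1

/-- Transaction `t` writes to `x` in the valued history `h`. -/
def vWrites (h : List VStmt) (t : ℕ+) (x : ℕ) : Prop :=
  ∃ v, VStmt.wr t x v ∈ h

/-- The occurrence at position `i` in `h` is a global read `rd_t(x,v)`. -/
def vGlobalRead (h : List VStmt) (i : ℕ) (t : ℕ+) (x : ℕ) (v : ℕ) : Prop :=
  h[i]? = some (VStmt.rd t x v) ∧ ∀ (j : ℕ) (v' : ℕ), j < i → h[j]? ≠ some (VStmt.wr t x v')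

/-- The last write of transaction `t` to variable `x` in `h` has value `v`. -/
def lastWrite (h : List VStmt) (t : ℕ+) (x : ℕ) (v : ℕ) : Prop :=
  ∃ i, h[i]? = some (VStmt.wr t x v) ∧
    ∀ (j : ℕ) (v' : ℕ), i < j → h[j]? ≠ some (VStmt.wr t x v')

/-- `t'` is a `<_h`-maximal committing transaction preceding `t` that writes to `x`. -/
def maxCommittingWriter (h : List VStmt) (t : ℕ+) (x : ℕ) (t' : ℕ+) : Prop :=
  vCommitting h t' ∧ vPrecedes h t' t ∧ vWrites h t' x ∧
  ∀ t'', vCommitting h t'' → vPrecedes h t'' t → vWrites h t'' x →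
    t'' = t' ∨ vPrecedes h t'' t'

/-- A sequential valued history is legal: every global read `rd_t(x,v)` returns
the value of the last write to `x` of the `<_h`-maximal committing transaction
preceding `t` writing to `x`, and `0` if no such transaction exists. -/
def vLegal (h : List VStmt) : Prop :=
  ∀ i t x v, vGlobalRead h i t x v →
    (∀ t', maxCommittingWriter h t x t' → ∀ v', lastWrite h t' x v' → v = v') ∧
    ((¬ ∃ t', vCommitting h t' ∧ vPrecedes h t' t ∧ vWrites h t' x) → v = 0)

/-- Value-equivalence of valued histories. -/
def valueEquiv (h h' : List VStmt) : Prop :=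
  (∀ t, vProj h t = vProj h' t) ∧
  (∀ t1 t2, t1 ≠ t2 → vPrecedes h t1 t2 → vFinished h t1 → vPrecedes h' t1 t2)

/-- A valued history is value-opaque if some sequential legal valued history is
value-equivalent to it. -/
def ValueOpaque (h : List VStmt) : Prop :=
  ∃ h', vSequential h' ∧ vLegal h' ∧ valueEquiv h h'

/-!
In the serial history `T₁ T₂ T₃` transaction 3 reads `x` and `y` from transaction 2, the last
committed transaction before it, and 5 and 43 are indeed the last values 2 writes; so that
history is legal and witnesses value-opacity. Without values, `rd₃(x)` precedes `cmt₂`, which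
precedes `rd₃(y)`, and both pairs are conflicts: any strictly equivalent history keeps this
order, so it interleaves transactions 2 and 3 and cannot be sequential.
-/

theorem List.count_take_eq_zero_of_count_eq_one {α : Type*} [BEq α] [LawfulBEq α] {l : List α}
    {i : ℕ} {a : α} (hi : l[i]? = some a) (h1 : l.count a = 1) : (l.take i).count a = 0 := by
  have ha : a ∈ l.drop i := List.mem_of_getElem? (i := 0) (by rwa [List.getElem?_drop])
  have hsplit := List.count_append (a := a) (l₁ := l.take i) (l₂ := l.drop i)
  rw [List.take_append_drop, h1] at hsplit
  have := List.count_pos_iff.2 ha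
  omega

theorem occurs_of_mem {h : List Stmt} {s : Stmt} (hs : s ∈ h) : occurs h s.txn :=
  List.ne_nil_of_mem (List.mem_filter.2 ⟨hs, by simp⟩)

theorem globalRead_of_not_mem {h : List Stmt} {i : ℕ} {t : ℕ+} {x : ℕ}
    (hi : h[i]? = some (Stmt.rd t x)) (hw : Stmt.wr t x ∉ h) : globalRead h i t x :=
  ⟨hi, fun _ _ hj => hw (List.mem_of_getElem? hj)⟩

theorem exists_corresponds_of_count_eq_one {h h' : List Stmt} (hp : h.Perm h') {i : ℕ}
    {s : Stmt} (hi : h[i]? = some s) (hs : h.count s = 1) :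
    ∃ i', h'[i']? = some s ∧ corresponds h h' i i' := by
  obtain ⟨i', hi'⟩ := List.mem_iff_getElem?.1 (hp.subset (List.mem_of_getElem? hi))
  refine ⟨i', hi', s, hi, hi', ?_⟩
  rw [List.count_take_eq_zero_of_count_eq_one hi hs,
    List.count_take_eq_zero_of_count_eq_one hi' (hp.count_eq s ▸ hs)]

/-- A strictly equivalent history keeps `a` before `b` before `c`; as `a` and `c` belong to
the same transaction, that transaction and the one of `b` cannot be ordered either way. -/
theorem not_isOpaque_of_conflict_chain {h : List Stmt} {i j k : ℕ} {a b c : Stmt}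
    (ha : h[i]? = some a) (hb : h[j]? = some b) (hc : h[k]? = some c)
    (ha1 : h.count a = 1) (hb1 : h.count b = 1) (hc1 : h.count c = 1)
    (hij : i < j) (hjk : j < k) (hconf_ij : conflict h i j) (hconf_jk : conflict h j k)
    (hab : a.txn ≠ b.txn) (hac : a.txn = c.txn) : ¬ IsOpaque h := by
  rintro ⟨h', hseq, hperm, -, -, hconf⟩
  obtain ⟨i', ha', hi'⟩ := exists_corresponds_of_count_eq_one hperm ha ha1
  obtain ⟨j', hb', hj'⟩ := exists_corresponds_of_count_eq_one hperm hb hb1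
  obtain ⟨k', hc', hk'⟩ := exists_corresponds_of_count_eq_one hperm hc hc1
  have hij' : i' < j' := hconf i j i' j' hij hconf_ij hi' hj'
  have hjk' : j' < k' := hconf j k j' k' hjk hconf_jk hj' hk'
  rcases hseq _ _ hab (occurs_of_mem (List.mem_of_getElem? ha'))
      (occurs_of_mem (List.mem_of_getElem? hb')) with hp | hp
  · exact (hp.2.2 k' j' _ _ hc' hb' hac.symm rfl).not_gt hjk'
  · exact (hp.2.2 j' i' _ _ hb' ha' rfl rfl).not_gt hij'

theorem vOccurs_iff {h : List VStmt} {t : ℕ+} : vOccurs h t ↔ ∃ s ∈ h, s.txn = t := by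
  simp [vOccurs, vProj, List.filter_eq_nil_iff]

theorem vPrecedes_asymm {h : List VStmt} {t1 t2 : ℕ+} (h12 : vPrecedes h t1 t2) :
    ¬ vPrecedes h t2 t1 := by
  obtain ⟨s1, hs1, rfl⟩ := vOccurs_iff.1 h12.1
  obtain ⟨s2, hs2, rfl⟩ := vOccurs_iff.1 h12.2.1
  obtain ⟨i, hi⟩ := List.mem_iff_getElem?.1 hs1
  obtain ⟨j, hj⟩ := List.mem_iff_getElem?.1 hs2
  exact fun h21 => (h12.2.2 i j s1 s2 hi hj rfl rfl).not_gt (h21.2.2 j i s2 s1 hj hi rfl rfl)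

theorem vPrecedes_of_pairwise_txn_le {h : List VStmt}
    (hsorted : (h.map VStmt.txn).Pairwise (· ≤ ·)) {t1 t2 : ℕ+} (h12 : t1 < t2)
    (ht1 : vOccurs h t1) (ht2 : vOccurs h t2) : vPrecedes h t1 t2 := by
  refine ⟨ht1, ht2, fun i j s1 s2 hi hj hs1 hs2 => ?_⟩
  by_contra! hji
  obtain ⟨hilt, rfl⟩ := List.getElem?_eq_some_iff.1 hi
  obtain ⟨hjlt, rfl⟩ := List.getElem?_eq_some_iff.1 hj
  rcases hji.lt_or_eq with hji | rfl
  · have := List.pairwise_iff_getElem.1 hsorted j i (by simpa) (by simpa) hji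
    simp only [List.getElem_map, hs1, hs2] at this
    exact this.not_gt h12
  · exact h12.ne (hs1.symm.trans hs2)

theorem vSequential_of_pairwise_txn_le {h : List VStmt}
    (hsorted : (h.map VStmt.txn).Pairwise (· ≤ ·)) : vSequential h := fun _ _ hne h1 h2 =>
  hne.lt_or_gt.imp (vPrecedes_of_pairwise_txn_le hsorted · h1 h2)
    (vPrecedes_of_pairwise_txn_le hsorted · h2 h1)

theorem lastWrite_unique {h : List VStmt} {t : ℕ+} {x v v' : ℕ}
    (hv : lastWrite h t x v) (hv' : lastWrite h t x v') : v = v' := by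
  obtain ⟨i, hi, hi_last⟩ := hv
  obtain ⟨j, hj, hj_last⟩ := hv'
  rcases lt_trichotomy i j with hij | rfl | hji
  · exact absurd hj (hi_last j v' hij)
  · simpa using hi.symm.trans hj
  · exact absurd hi (hj_last i v hji)

theorem lastWrite_of_not_mem_drop {h : List VStmt} {i : ℕ} {t : ℕ+} {x v : ℕ}
    (hi : h[i]? = some (VStmt.wr t x v)) (hlater : ∀ v', VStmt.wr t x v' ∉ h.drop (i + 1)) :
    lastWrite h t x v := by
  refine ⟨i, hi, fun j v' hij hj => hlater v' (List.mem_of_getElem? (i := j - (i + 1)) ?_)⟩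
  rwa [List.getElem?_drop, Nat.add_sub_cancel' hij]

/-- The hypothesis makes `t₀` the `<_h`-maximal committing writer preceding `t`. -/
theorem vLegal_of_forall_globalRead {h : List VStmt}
    (hreads : ∀ i t x v, vGlobalRead h i t x v → ∃ t₀, vCommitting h t₀ ∧ vPrecedes h t₀ t ∧
      lastWrite h t₀ x v ∧ ∀ u, vPrecedes h t₀ u → ¬ vPrecedes h u t) :
    vLegal h := by
  intro i t x v hread
  obtain ⟨t₀, hcmt, hprec, hlast, hbetween⟩ := hreads i t x v hread
  have hwrites : vWrites h t₀ x := by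
    obtain ⟨k, hk, -⟩ := hlast
    exact ⟨v, List.mem_of_getElem? hk⟩
  refine ⟨fun t' hmax v' hlast' => ?_, fun hnone => (hnone ⟨t₀, hcmt, hprec, hwrites⟩).elim⟩
  rcases hmax.2.2.2 t₀ hcmt hprec hwrites with rfl | hlt
  · exact lastWrite_unique hlast hlast'
  · exact (hbetween t' hlt hmax.2.1).elim

namespace H4

def history (x y : ℕ) : List VStmt :=
  [VStmt.wr 1 x 5, VStmt.wr 2 x 5, VStmt.wr 1 y 42, VStmt.wr 2 y 43, VStmt.cmt 1,
    VStmt.rd 3 x 5, VStmt.cmt 2, VStmt.rd 3 y 43, VStmt.cmt 3]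

def serial (x y : ℕ) : List VStmt :=
  [VStmt.wr 1 x 5, VStmt.wr 1 y 42, VStmt.cmt 1, VStmt.wr 2 x 5, VStmt.wr 2 y 43, VStmt.cmt 2,
    VStmt.rd 3 x 5, VStmt.rd 3 y 43, VStmt.cmt 3]

variable (x y : ℕ)

theorem serial_pairwise_txn_le : ((serial x y).map VStmt.txn).Pairwise (· ≤ ·) := by
  simp only [serial, List.map, VStmt.txn]
  decide

theorem serial_vOccurs_iff {t : ℕ+} : vOccurs (serial x y) t ↔ t = 1 ∨ t = 2 ∨ t = 3 := by
  simp [vOccurs_iff, serial, VStmt.txn, eq_comm]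

theorem serial_vPrecedes {t1 t2 : ℕ+} (h12 : t1 < t2) (ht1 : t1 = 1 ∨ t1 = 2 ∨ t1 = 3)
    (ht2 : t2 = 1 ∨ t2 = 2 ∨ t2 = 3) : vPrecedes (serial x y) t1 t2 :=
  vPrecedes_of_pairwise_txn_le (serial_pairwise_txn_le x y) h12
    ((serial_vOccurs_iff x y).2 ht1) ((serial_vOccurs_iff x y).2 ht2)

theorem serial_vPrecedes_chain :
    vPrecedes (serial x y) 1 2 ∧ vPrecedes (serial x y) 2 3 ∧ vPrecedes (serial x y) 1 3 :=
  ⟨serial_vPrecedes x y (by decide) (by decide) (by decide),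
    serial_vPrecedes x y (by decide) (by decide) (by decide),
    serial_vPrecedes x y (by decide) (by decide) (by decide)⟩

theorem serial_vLegal (hxy : x ≠ y) : vLegal (serial x y) := by
  apply vLegal_of_forall_globalRead
  rintro i t z v ⟨hi, -⟩
  have hmem := List.mem_of_getElem? hi
  simp only [serial, List.mem_cons, VStmt.rd.injEq, reduceCtorEq, List.not_mem_nil,
    false_or, or_false] at hmem
  obtain ⟨rfl, hlast⟩ : t = 3 ∧ lastWrite (serial x y) 2 z v := by
    rcases hmem with ⟨rfl, rfl, rfl⟩ | ⟨rfl, rfl, rfl⟩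
    · exact ⟨rfl, lastWrite_of_not_mem_drop (i := 3) rfl (by simp [serial, hxy])⟩
    · exact ⟨rfl, lastWrite_of_not_mem_drop (i := 4) rfl (by simp [serial])⟩
  refine ⟨2, by simp [vCommitting, vProj, serial, VStmt.txn],
    (serial_vPrecedes_chain x y).2.1, hlast, ?_⟩
  rintro u h2u hu3
  rcases (serial_vOccurs_iff x y).1 h2u.2.1 with rfl | rfl | rfl
  · exact vPrecedes_asymm (serial_vPrecedes_chain x y).1 h2u
  · exact vPrecedes_asymm h2u h2u
  · exact vPrecedes_asymm hu3 hu3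

theorem history_vProj (t : ℕ+) : vProj (history x y) t = vProj (serial x y) t := by
  by_cases ht : t = 1 ∨ t = 2 ∨ t = 3
  · rcases ht with rfl | rfl | rfl <;> rfl
  · simp only [not_or] at ht
    simp [vProj, history, serial, VStmt.txn, Ne.symm ht.1, Ne.symm ht.2.1, Ne.symm ht.2.2]

theorem history_vOccurs_iff {t : ℕ+} : vOccurs (history x y) t ↔ t = 1 ∨ t = 2 ∨ t = 3 := by
  rw [vOccurs, history_vProj]
  exact serial_vOccurs_iff x y

theorem history_lt_of_vPrecedes {t1 t2 : ℕ+} (hp : vPrecedes (history x y) t1 t2) : t1 < t2 := by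
  rcases lt_trichotomy t1 t2 with h12 | rfl | h21
  · exact h12
  · exact (vPrecedes_asymm hp hp).elim
  rcases (history_vOccurs_iff x y).1 hp.1 with rfl | rfl | rfl <;>
    rcases (history_vOccurs_iff x y).1 hp.2.1 with rfl | rfl | rfl <;>
    try exact absurd h21 (by decide)
  -- in each remaining case a statement of `t1` (first index) follows one of `t2` (second index)
  · exact absurd (hp.2.2 3 2 _ _ rfl rfl rfl rfl) (by decide)
  · exact absurd (hp.2.2 5 4 _ _ rfl rfl rfl rfl) (by decide)
  · exact absurd (hp.2.2 5 1 _ _ rfl rfl rfl rfl) (by decide)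

theorem history_valueEquiv_serial : valueEquiv (history x y) (serial x y) :=
  ⟨history_vProj x y, fun _ _ _ hp _ => serial_vPrecedes x y (history_lt_of_vPrecedes x y hp)
    ((history_vOccurs_iff x y).1 hp.1) ((history_vOccurs_iff x y).1 hp.2.1)⟩

theorem eraseH_history_not_isOpaque (hxy : x ≠ y) : ¬ IsOpaque (eraseH (history x y)) := by
  have hw3 : ∀ z, Stmt.wr 3 z ∉ eraseH (history x y) := by
    simp [eraseH, history, VStmt.erase]
  refine not_isOpaque_of_conflict_chain (i := 5) (j := 6) (k := 7) rfl rfl rfl ?_ ?_ ?_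
    (by decide) (by decide) ?_ ?_ (by simp [VStmt.erase, Stmt.txn]) rfl
  · simp [eraseH, history, VStmt.erase, hxy]
  · simp [eraseH, history, VStmt.erase]
  · simp [eraseH, history, VStmt.erase, hxy]
  · exact ⟨3, 2, by decide, Or.inl ⟨x, globalRead_of_not_mem rfl (hw3 x), rfl,
      by simp [writes, eraseH, history, VStmt.erase]⟩⟩
  · exact ⟨3, 2, by decide, Or.inr (Or.inl ⟨y, globalRead_of_not_mem rfl (hw3 y), rfl,
      by simp [writes, eraseH, history, VStmt.erase]⟩)⟩

end H4

/-- The valued history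
`h4 = [wr_1(x,5), wr_2(x,5), wr_1(y,42), wr_2(y,43), cmt_1, rd_3(x,5), cmt_2, rd_3(y,43), cmt_3]`
(for distinct variables `x`, `y`) is value-opaque, witnessed by a sequential legal
history ordering transaction 1 before 2 before 3, but it is not opaque under the
conflict-based definition (after erasing values). -/
theorem h4_value_opaque_not_conflict_opaque (x y : ℕ) (hxy : x ≠ y) :
    let h4 : List VStmt := [VStmt.wr 1 x 5, VStmt.wr 2 x 5, VStmt.wr 1 y 42,
      VStmt.wr 2 y 43, VStmt.cmt 1, VStmt.rd 3 x 5, VStmt.cmt 2,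
      VStmt.rd 3 y 43, VStmt.cmt 3]
    ValueOpaque h4 ∧
    (∃ h', vSequential h' ∧ vLegal h' ∧ valueEquiv h4 h' ∧
       vPrecedes h' 1 2 ∧ vPrecedes h' 2 3 ∧ vPrecedes h' 1 3) ∧
    ¬ IsOpaque (eraseH h4) := by
  intro h4
  have hseq := vSequential_of_pairwise_txn_le (H4.serial_pairwise_txn_le x y)
  have hlegal := H4.serial_vLegal x y hxy
  have hequiv : valueEquiv h4 (H4.serial x y) := H4.history_valueEquiv_serial x y
  exact ⟨⟨_, hseq, hlegal, hequiv⟩, ⟨_, hseq, hlegal, hequiv, H4.serial_vPrecedes_chain x y⟩,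
    H4.eraseH_history_not_isOpaque x y hxy⟩
end

section
/- The conflict-based and the value-based definitions of opacity are incomparable: there exists a valued history that is opaque under the conflict-based definition (after erasing values) but is not value-opaque, and there exists a valued history that is value-opaque but is not opaque under the conflict-based definition (after erasing values). -/
theorem List.exists_getElem?_eq_count_take_eq {α : Type*} [DecidableEq α] {l : List α} {a : α}
    {n : ℕ} (hn : n < l.count a) : ∃ i, l[i]? = some a ∧ (l.take i).count a = n := by
  induction l generalizing n with
  | nil => simp at hn
  | cons b l ih =>
    by_cases hb : b = a
    · subst hb
      cases n with
      | zero => exact ⟨0, rfl, by simp⟩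
      | succ n =>
        obtain ⟨i, hi, hc⟩ := ih (n := n) (by simpa using hn)
        exact ⟨i + 1, hi, by simp [hc]⟩
    · obtain ⟨i, hi, hc⟩ := ih (n := n) (by simpa [List.count_cons, hb] using hn)
      exact ⟨i + 1, hi, by simp [hb, hc]⟩

theorem List.count_take_lt_count_take {α : Type*} [DecidableEq α] {l : List α} {a : α}
    {i j : ℕ} (hi : l[i]? = some a) (hij : i < j) : (l.take i).count a < (l.take j).count a :=
  calc (l.take i).count a < (l.take (i + 1)).count a := by simp [List.take_add_one, hi]
    _ ≤ (l.take j).count a := (List.take_sublist_take_left hij).count_le a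

theorem occurs_iff {h : List Stmt} {t : ℕ+} : occurs h t ↔ ∃ s ∈ h, s.txn = t := by
  simp [occurs, proj]

theorem exists_corresponds {h h' : List Stmt} (hp : h.Perm h') {i : ℕ} {s : Stmt}
    (hi : h[i]? = some s) : ∃ i', corresponds h h' i i' := by
  have hlt : (h.take i).count s < h'.count s := by
    have hlen : i < h.length := (List.getElem?_eq_some_iff.mp hi).1
    simpa [hp.count_eq] using List.count_take_lt_count_take hi hlen
  obtain ⟨i', hi', hc⟩ := List.exists_getElem?_eq_count_take_eq hlt
  exact ⟨i', s, hi, hi', hc.symm⟩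

theorem corresponds.getElem?_eq {h h' : List Stmt} {i i' : ℕ} (hc : corresponds h h' i i') :
    h'[i']? = h[i]? := by
  obtain ⟨s, hi, hi', -⟩ := hc
  rw [hi, hi']

theorem eq_of_corresponds_self {h : List Stmt} {i i' : ℕ} (hc : corresponds h h i i') :
    i = i' := by
  obtain ⟨s, hi, hi', hcount⟩ := hc
  rcases lt_trichotomy i i' with hlt | heq | hgt
  · exact absurd hcount (List.count_take_lt_count_take hi hlt).ne
  · exact heq
  · exact absurd hcount (List.count_take_lt_count_take hi' hgt).ne'

theorem strictEquiv_refl (h : List Stmt) : strictEquiv h h :=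
  ⟨.refl h, fun _ => rfl, fun _ _ _ hp _ => hp, fun _ _ _ _ hij _ hi hj =>
    eq_of_corresponds_self hi ▸ eq_of_corresponds_self hj ▸ hij⟩

theorem isOpaque_of_sequential {h : List Stmt} (hs : sequential h) : IsOpaque h :=
  ⟨h, hs, strictEquiv_refl h⟩

theorem sequential_singleton (s : Stmt) : sequential [s] := by
  intro t1 t2 hne h1 h2
  simp only [occurs_iff, List.mem_singleton, exists_eq_left] at h1 h2
  exact absurd (h1.symm.trans h2) hne

theorem sequential.txn_eq_of_between {h : List Stmt} (hs : sequential h) {i j k : ℕ}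
    {a b c : Stmt} (ha : h[i]? = some a) (hc : h[j]? = some c) (hb : h[k]? = some b)
    (hij : i < j) (hjk : j < k) (hab : a.txn = b.txn) : c.txn = a.txn := by
  by_contra hne
  have hocc : ∀ {l : ℕ} {s : Stmt}, h[l]? = some s → occurs h s.txn :=
    fun hl => occurs_iff.mpr ⟨_, List.mem_of_getElem? hl, rfl⟩
  rcases hs a.txn c.txn (Ne.symm hne) (hocc ha) (hocc hc) with ⟨-, -, hp⟩ | ⟨-, -, hp⟩
  · exact absurd (hp k j b c hb hc hab.symm rfl) (by omega)
  · exact absurd (hp j i c a hc ha rfl rfl) (by omega)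

theorem not_isOpaque_of_conflict_between {h : List Stmt} {i j k : ℕ} {a b c : Stmt}
    (ha : h[i]? = some a) (hc : h[j]? = some c) (hb : h[k]? = some b) (hij : i < j) (hjk : j < k)
    (hcij : conflict h i j) (hcjk : conflict h j k) (hab : a.txn = b.txn) (hca : c.txn ≠ a.txn) :
    ¬ IsOpaque h := by
  rintro ⟨h', hs, hp, -, -, hconf⟩
  obtain ⟨i', hi'⟩ := exists_corresponds hp ha
  obtain ⟨j', hj'⟩ := exists_corresponds hp hc
  obtain ⟨k', hk'⟩ := exists_corresponds hp hb
  refine hca (hs.txn_eq_of_between ?_ ?_ ?_ (hconf i j i' j' hij hcij hi' hj')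
    (hconf j k j' k' hjk hcjk hj' hk') hab)
  · rw [hi'.getElem?_eq, ha]
  · rw [hj'.getElem?_eq, hc]
  · rw [hk'.getElem?_eq, hb]

theorem vCommitting.cmt_mem {h : List VStmt} {t : ℕ+} (hc : vCommitting h t) :
    VStmt.cmt t ∈ h :=
  (List.mem_filter.mp (List.mem_of_getLast? hc)).1

theorem vLegal.eq_zero_of_forall_not_vWrites {h : List VStmt} (hl : vLegal h) {i : ℕ} {t : ℕ+}
    {x v : ℕ} (hr : vGlobalRead h i t x v) (hw : ∀ t', ¬ vWrites h t' x) : v = 0 :=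
  (hl i t x v hr).2 fun ⟨t', _, _, hwt'⟩ => hw t' hwt'

theorem valueEquiv.eq_of_forall_txn_eq {h h' : List VStmt} {t : ℕ+} (he : valueEquiv h h')
    (ht : ∀ s ∈ h, s.txn = t) : h' = h := by
  have ht' : ∀ s ∈ h', s.txn = t := fun s hs => by
    have hs' : s ∈ vProj h s.txn := by
      rw [he.1]
      exact List.mem_filter.mpr ⟨hs, by simp⟩
    exact ht s (List.mem_filter.mp hs').1
  calc h' = vProj h' t := (List.filter_eq_self.mpr (by simpa using ht')).symm
    _ = vProj h t := (he.1 t).symm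
    _ = h := List.filter_eq_self.mpr (by simpa using ht)

theorem not_valueOpaque_singleton_rd {t : ℕ+} {x v : ℕ} (hv : v ≠ 0) :
    ¬ ValueOpaque [VStmt.rd t x v] := by
  rintro ⟨h', -, hl, he⟩
  obtain rfl := he.eq_of_forall_txn_eq (t := t) (by simp [VStmt.txn])
  refine hv (hl.eq_zero_of_forall_not_vWrites (i := 0) ⟨rfl, fun j _ hj => by omega⟩ ?_)
  rintro t' ⟨v', hw⟩
  simp at hw

theorem not_vPrecedes_of_between {h : List VStmt} {i j k : ℕ} {a b c : VStmt}
    (ha : h[i]? = some a) (hc : h[j]? = some c) (hb : h[k]? = some b) (hij : i < j) (hjk : j < k)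
    (hab : a.txn = b.txn) : ¬ vPrecedes h a.txn c.txn ∧ ¬ vPrecedes h c.txn a.txn :=
  ⟨fun ⟨_, _, hp⟩ => absurd (hp k j b c hb hc hab.symm rfl) (by omega),
    fun ⟨_, _, hp⟩ => absurd (hp j i c a hc ha rfl rfl) (by omega)⟩

theorem vPrecedes_append {p q : List VStmt} {t1 t2 : ℕ+} (hp : ∀ s ∈ p, s.txn ≠ t2)
    (hq : ∀ s ∈ q, s.txn ≠ t1) (h1 : vOccurs p t1) (h2 : vOccurs q t2) :
    vPrecedes (p ++ q) t1 t2 := by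
  rw [vOccurs_iff] at h1 h2
  refine ⟨vOccurs_iff.mpr ?_, vOccurs_iff.mpr ?_, ?_⟩
  · obtain ⟨s, hs, hst⟩ := h1
    exact ⟨s, List.mem_append_left q hs, hst⟩
  · obtain ⟨s, hs, hst⟩ := h2
    exact ⟨s, List.mem_append_right p hs, hst⟩
  rintro i j s1 s2 hi hj rfl rfl
  have hi' : i < p.length := by
    by_contra hge
    rw [List.getElem?_append_right (by omega)] at hi
    exact hq s1 (List.mem_of_getElem? hi) rfl
  have hj' : p.length ≤ j := by
    by_contra hlt
    rw [List.getElem?_append_left (by omega)] at hj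
    exact hp s2 (List.mem_of_getElem? hj) rfl
  omega

theorem vSequential_append {p q : List VStmt} {t1 t2 : ℕ+} (hp : ∀ s ∈ p, s.txn = t1)
    (hq : ∀ s ∈ q, s.txn = t2) : vSequential (p ++ q) := by
  have hocc : ∀ u, vOccurs (p ++ q) u → (u = t1 ∧ vOccurs p u) ∨ (u = t2 ∧ vOccurs q u) := by
    intro u hu
    obtain ⟨s, hs, rfl⟩ := vOccurs_iff.mp hu
    rcases List.mem_append.mp hs with hs | hs
    · exact .inl ⟨hp s hs, vOccurs_iff.mpr ⟨s, hs, rfl⟩⟩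
    · exact .inr ⟨hq s hs, vOccurs_iff.mpr ⟨s, hs, rfl⟩⟩
  intro u1 u2 hne hu1 hu2
  rcases hocc u1 hu1 with ⟨rfl, h1⟩ | ⟨rfl, h1⟩ <;> rcases hocc u2 hu2 with ⟨rfl, h2⟩ | ⟨rfl, h2⟩
  · exact absurd rfl hne
  · exact .inl (vPrecedes_append (fun s hs => hp s hs ▸ hne) (fun s hs => hq s hs ▸ hne.symm) h1 h2)
  · exact .inr (vPrecedes_append (fun s hs => hp s hs ▸ hne.symm) (fun s hs => hq s hs ▸ hne) h2 h1)
  · exact absurd rfl hne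

def readAcrossCommit : List VStmt :=
  [.rd 1 0 0, .wr 2 0 0, .wr 2 1 1, .cmt 2, .rd 1 1 1]

def readAcrossCommitSerial : List VStmt :=
  [.wr 2 0 0, .wr 2 1 1, .cmt 2] ++ [.rd 1 0 0, .rd 1 1 1]

theorem vPrecedes_readAcrossCommitSerial : vPrecedes readAcrossCommitSerial 2 1 :=
  vPrecedes_append (by simp [VStmt.txn]) (by simp [VStmt.txn])
    (vOccurs_iff.mpr ⟨.cmt 2, by simp, rfl⟩) (vOccurs_iff.mpr ⟨.rd 1 0 0, by simp, rfl⟩)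

theorem vLegal_readAcrossCommitSerial : vLegal readAcrossCommitSerial := by
  intro i t x v hr
  have hrd := List.mem_of_getElem? hr.1
  obtain ⟨rfl, hw⟩ : t = 1 ∧ VStmt.wr 2 x v ∈ readAcrossCommitSerial := by
    simp [readAcrossCommitSerial] at hrd ⊢
    tauto
  refine ⟨?_, fun hno => (hno ⟨2, rfl, vPrecedes_readAcrossCommitSerial, v, hw⟩).elim⟩
  rintro t' ⟨hc, -⟩ v' ⟨k, hk, -⟩
  obtain rfl : t' = 2 := by simpa [readAcrossCommitSerial] using hc.cmt_mem
  have hw' := List.mem_of_getElem? hk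
  simp [readAcrossCommitSerial] at hw hw'
  omega

theorem valueEquiv_readAcrossCommit : valueEquiv readAcrossCommit readAcrossCommitSerial := by
  refine ⟨fun t => ?_, fun t1 t2 hne hp _ => ?_⟩
  · by_cases h1 : t = 1
    · subst h1; rfl
    by_cases h2 : t = 2
    · subst h2; rfl
    simp [vProj, readAcrossCommit, readAcrossCommitSerial, VStmt.txn, Ne.symm h1, Ne.symm h2]
  have hocc : ∀ u, vOccurs readAcrossCommit u → u = 1 ∨ u = 2 := fun u hu => by
    have := vOccurs_iff.mp hu
    simp [readAcrossCommit, VStmt.txn] at this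
    tauto
  have hsplit := not_vPrecedes_of_between (h := readAcrossCommit) (i := 0) (j := 1) (k := 4)
    rfl rfl rfl (by omega) (by omega) rfl
  rcases hocc t1 hp.1 with rfl | rfl <;> rcases hocc t2 hp.2.1 with rfl | rfl
  · exact absurd rfl hne
  · exact absurd hp hsplit.1
  · exact absurd hp hsplit.2
  · exact absurd rfl hne

theorem valueOpaque_readAcrossCommit : ValueOpaque readAcrossCommit :=
  ⟨readAcrossCommitSerial, vSequential_append (t1 := 2) (t2 := 1) (by simp [VStmt.txn])
    (by simp [VStmt.txn]), vLegal_readAcrossCommitSerial, valueEquiv_readAcrossCommit⟩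

theorem not_isOpaque_eraseH_readAcrossCommit : ¬ IsOpaque (eraseH readAcrossCommit) := by
  have hc03 : conflict (eraseH readAcrossCommit) 0 3 :=
    ⟨1, 2, by decide, .inl ⟨0, ⟨rfl, fun _ hj => by omega⟩, rfl,
      show Stmt.wr 2 0 ∈ eraseH readAcrossCommit by decide⟩⟩
  have hc34 : conflict (eraseH readAcrossCommit) 3 4 := by
    refine ⟨1, 2, by decide, .inr (.inl ⟨1, ⟨rfl, fun j hj => ?_⟩, rfl,
      show Stmt.wr 2 1 ∈ eraseH readAcrossCommit by decide⟩)⟩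
    interval_cases j <;> decide
  exact not_isOpaque_of_conflict_between (a := .rd 1 0) (b := .rd 1 1) (c := .cmt 2)
    rfl rfl rfl (by omega) (by omega) hc03 hc34 rfl (by decide)

/-- The conflict-based and the value-based definitions of opacity are
incomparable: some valued history is conflict-opaque (after erasing values) but
not value-opaque, and some valued history is value-opaque but not conflict-opaque
(after erasing values). -/
theorem conflict_and_value_opacity_incomparable :
    (∃ h : List VStmt, IsOpaque (eraseH h) ∧ ¬ ValueOpaque h) ∧
    (∃ h : List VStmt, ValueOpaque h ∧ ¬ IsOpaque (eraseH h)) :=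
  ⟨⟨[.rd 1 0 1], isOpaque_of_sequential (sequential_singleton _),
      not_valueOpaque_singleton_rd one_ne_zero⟩,
    ⟨readAcrossCommit, valueOpaque_readAcrossCommit, not_isOpaque_eraseH_readAcrossCommit⟩⟩
end
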